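/- arXiv:1110.1564 — 3 statements merged into one kernel-verified Lean document; each statement's English description precedes it below -/
import Mathlib

section
/- Let P be a positive semidefinite symmetric n×n real matrix, B̃ an n×m real matrix, and R̃ a positive definite symmetric m×m real matrix. Then R̃ + B̃ᵀPB̃ is positive definite, and the matrix P − PB̃(R̃ + B̃ᵀPB̃)⁻¹B̃ᵀP is positive semidefinite. -/
/-!
Completing the square: with the gain `K = (R̃ + B̃ᵀPB̃)⁻¹B̃ᵀP` one has the Joseph form
`P - PB̃K = (1 - B̃K)ᵀP(1 - B̃K) + KᵀR̃K`, a sum of congruences of positive semidefinite matrices.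
-/

open Matrix

namespace Matrix

variable {n m R : Type*} [Fintype n] [Fintype m] [DecidableEq n] [DecidableEq m]

theorem sub_mul_inv_mul_eq_joseph_form [CommRing R] [StarRing R] {P : Matrix n n R}
    {D : Matrix m m R} (B : Matrix n m R)
    (hP : P.IsHermitian) (hD : D.IsHermitian) (hD_det : IsUnit D.det) :
    P - P * B * D⁻¹ * Bᴴ * P =
      (1 - B * (D⁻¹ * Bᴴ * P))ᴴ * P * (1 - B * (D⁻¹ * Bᴴ * P)) +
        (D⁻¹ * Bᴴ * P)ᴴ * (D - Bᴴ * P * B) * (D⁻¹ * Bᴴ * P) := by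
  set K := D⁻¹ * Bᴴ * P
  have hK : Kᴴ = P * B * D⁻¹ := by
    simp only [K, conjTranspose_mul, hP.eq, hD.inv.eq, conjTranspose_conjTranspose,
      Matrix.mul_assoc]
  have hKDK : Kᴴ * D * K = P * B * K := by
    rw [hK]
    simp only [K, Matrix.mul_assoc, nonsing_inv_mul_cancel_left _ _ hD_det]
  have hKBP : Kᴴ * Bᴴ * P = P * B * K := by
    rw [hK]
    simp only [K, Matrix.mul_assoc]
  have hPBK : P * B * D⁻¹ * Bᴴ * P = P * B * K := by
    simp only [K, Matrix.mul_assoc]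
  rw [hPBK, conjTranspose_sub, conjTranspose_one, conjTranspose_mul]
  simp only [Matrix.mul_assoc] at hKDK hKBP ⊢
  simp only [Matrix.sub_mul, Matrix.mul_sub, Matrix.one_mul, Matrix.mul_one, Matrix.mul_assoc,
    hKDK, hKBP]
  abel

theorem PosSemidef.sub_mul_inv_add_mul_mul [CommRing R] [PartialOrder R] [StarRing R]
    [StarOrderedRing R] {P : Matrix n n R} {Q : Matrix m m R} (B : Matrix n m R)
    (hP : P.PosSemidef) (hQ : Q.PosSemidef) (hD_det : IsUnit (Q + Bᴴ * P * B).det) :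
    (P - P * B * (Q + Bᴴ * P * B)⁻¹ * Bᴴ * P).PosSemidef := by
  have hD : (Q + Bᴴ * P * B).IsHermitian :=
    hQ.isHermitian.add (isHermitian_conjTranspose_mul_mul B hP.isHermitian)
  rw [sub_mul_inv_mul_eq_joseph_form B hP.isHermitian hD hD_det, add_sub_cancel_right]
  exact (hP.conjTranspose_mul_mul_same _).add (hQ.conjTranspose_mul_mul_same _)

end Matrix

theorem stmt_3 {n m : ℕ}
    (P : Matrix (Fin n) (Fin n) ℝ) (hP : P.PosSemidef)
    (Btil : Matrix (Fin n) (Fin m) ℝ)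
    (Rtil : Matrix (Fin m) (Fin m) ℝ) (hRtil : Rtil.PosDef) :
    (Rtil + Btilᵀ * P * Btil).PosDef ∧
      (P - P * Btil * (Rtil + Btilᵀ * P * Btil)⁻¹ * Btilᵀ * P).PosSemidef := by
  rw [← conjTranspose_eq_transpose_of_trivial]
  have hD : (Rtil + Btilᴴ * P * Btil).PosDef :=
    hRtil.add_posSemidef (hP.conjTranspose_mul_mul_same Btil)
  exact ⟨hD, hP.sub_mul_inv_add_mul_mul Btil hRtil.posSemidef
    ((isUnit_iff_isUnit_det _).mp hD.isUnit)⟩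
end

section
/- Let T > 0, b ∈ ℝ, and let p, π, p₀ : [0, T] → ℝ be continuously differentiable functions satisfying p′ + p − b²p² = 0, π′ − b²π² + p = 0, p₀′ + p₀ − b²p₀² = 0 on [0, T], with p(T) = g₀ + g, π(T) = g₀, p₀(T) = g₀, where g₀ ≥ 0 and g > 0. Assume p(s) > p₀(s) > 0 on [0, T). Then π(s) − p₀(s) = ∫ₛᵀ exp(−∫ₛᵗ b²(π(τ) + p₀(τ))dτ)(p(t) − p₀(t))dt, and consequently π(s) > p₀(s) for all s ∈ [0, T). -/
/-!
Writing `Δ = π - p₀`, the two Riccati equations subtract to the linear equation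
`Δ' = b²(π + p₀) Δ - (p - p₀)` with `Δ(T) = 0`. Multiplying by the integrating factor
`exp (-∫ₛᵗ b²(π + p₀))` turns its left side into an exact derivative, which gives the integral
formula; its integrand is positive on `(s, T)` because `p > p₀` there.
-/

open Real Set intervalIntegral

section VariationOfConstants

variable {a q Δ : ℝ → ℝ} {s T : ℝ}

theorem hasDerivAt_integral_of_mem_Ioo (ha : ContinuousOn a (Icc s T)) {t : ℝ}
    (ht : t ∈ Ioo s T) : HasDerivAt (fun u => ∫ τ in s..u, a τ) (a t) t :=
  integral_hasDerivAt_right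
    ((ha.mono (Icc_subset_Icc_right ht.2.le)).intervalIntegrable_of_Icc ht.1.le)
    (ContinuousOn.stronglyMeasurableAtFilter isOpen_Ioo (ha.mono Ioo_subset_Icc_self) t ht)
    (ha.continuousAt (Icc_mem_nhds ht.1 ht.2))

theorem continuousOn_exp_neg_integral_mul (hsT : s ≤ T) (ha : ContinuousOn a (Icc s T))
    (hq : ContinuousOn q (Icc s T)) :
    ContinuousOn (fun t => exp (-∫ τ in s..t, a τ) * q t) (Icc s T) := by
  have hprim : ContinuousOn (fun t => ∫ τ in s..t, a τ) (Icc s T) := by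
    rw [← uIcc_of_le hsT]
    exact continuousOn_primitive_interval (by rw [uIcc_of_le hsT]; exact ha.integrableOn_Icc)
  exact (hprim.neg.rexp).mul hq

theorem eq_integral_exp_neg_integral_mul_of_hasDerivAt (hsT : s ≤ T)
    (ha : ContinuousOn a (Icc s T)) (hq : ContinuousOn q (Icc s T))
    (hΔc : ContinuousOn Δ (Icc s T))
    (hΔ : ∀ t ∈ Ioo s T, HasDerivAt Δ (a t * Δ t - q t) t) (hΔT : Δ T = 0) :
    Δ s = ∫ t in s..T, exp (-∫ τ in s..t, a τ) * q t := by
  have hcont : ContinuousOn (fun t => exp (-∫ τ in s..t, a τ) * Δ t) (Icc s T) :=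
    continuousOn_exp_neg_integral_mul hsT ha hΔc
  have hderiv : ∀ t ∈ Ioo s T, HasDerivAt (fun t => exp (-∫ τ in s..t, a τ) * Δ t)
      (-(exp (-∫ τ in s..t, a τ) * q t)) t := by
    intro t ht
    exact (((hasDerivAt_integral_of_mem_Ioo ha ht).fun_neg.exp).mul (hΔ t ht)).congr_deriv
      (by ring)
  have hFTC := integral_eq_sub_of_hasDerivAt_of_le hsT hcont hderiv
    ((continuousOn_exp_neg_integral_mul hsT ha hq).intervalIntegrable_of_Icc hsT).neg
  simp only [integral_neg, integral_same, neg_zero, exp_zero, one_mul, hΔT, mul_zero] at hFTC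
  linarith

theorem integral_exp_neg_integral_mul_pos (hsT : s < T) (ha : ContinuousOn a (Icc s T))
    (hq : ContinuousOn q (Icc s T)) (hpos : ∀ t ∈ Ioo s T, 0 < q t) :
    0 < ∫ t in s..T, exp (-∫ τ in s..t, a τ) * q t :=
  intervalIntegral_pos_of_pos_on
    ((continuousOn_exp_neg_integral_mul hsT.le ha hq).intervalIntegrable_of_Icc hsT.le)
    (fun t ht => mul_pos (exp_pos _) (hpos t ht)) hsT

end VariationOfConstants

theorem stmt_10_general (T b g₀ : ℝ)
    (p pi' p₀ : ℝ → ℝ)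
    (hpi' : ∀ s ∈ Icc (0 : ℝ) T, HasDerivAt pi' (b ^ 2 * pi' s ^ 2 - p s) s)
    (hp₀ : ∀ s ∈ Icc (0 : ℝ) T, HasDerivAt p₀ (b ^ 2 * p₀ s ^ 2 - p₀ s) s)
    (hpc : ContinuousOn p (Icc 0 T)) (hpi'c : ContinuousOn pi' (Icc 0 T))
    (hp₀c : ContinuousOn p₀ (Icc 0 T))
    (hpi'T : pi' T = g₀) (hp₀T : p₀ T = g₀)
    (horder : ∀ s ∈ Ico (0 : ℝ) T, p₀ s < p s ∧ 0 < p₀ s) :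
    ∀ s ∈ Icc (0 : ℝ) T,
      pi' s - p₀ s =
        ∫ t in s..T,
          exp (-∫ τ in s..t, b ^ 2 * (pi' τ + p₀ τ)) * (p t - p₀ t) ∧
      (s < T → p₀ s < pi' s) := by
  intro s hs
  have hsub : Icc s T ⊆ Icc 0 T := Icc_subset_Icc_left hs.1
  have ha : ContinuousOn (fun τ => b ^ 2 * (pi' τ + p₀ τ)) (Icc s T) :=
    (continuousOn_const.mul (hpi'c.add hp₀c)).mono hsub
  have hq : ContinuousOn (fun t => p t - p₀ t) (Icc s T) := (hpc.sub hp₀c).mono hsub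
  have hΔ : ∀ t ∈ Ioo s T, HasDerivAt (fun t => pi' t - p₀ t)
      (b ^ 2 * (pi' t + p₀ t) * (pi' t - p₀ t) - (p t - p₀ t)) t := by
    intro t ht
    have ht' := hsub (Ioo_subset_Icc_self ht)
    exact ((hpi' t ht').sub (hp₀ t ht')).congr_deriv (by ring)
  have hformula := eq_integral_exp_neg_integral_mul_of_hasDerivAt (Δ := fun t => pi' t - p₀ t)
    hs.2 ha hq ((hpi'c.sub hp₀c).mono hsub) hΔ (by rw [hpi'T, hp₀T, sub_self])
  refine ⟨hformula, fun hsT => ?_⟩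
  have hpos := integral_exp_neg_integral_mul_pos hsT ha hq fun t ht =>
    sub_pos.2 (horder t ⟨hs.1.trans ht.1.le, ht.2⟩).1
  linarith

theorem stmt_10 (T b g₀ g : ℝ) (hT : 0 < T) (hg₀ : 0 ≤ g₀) (hg : 0 < g)
    (p pi' p₀ : ℝ → ℝ)
    (hp : ∀ s ∈ Icc (0 : ℝ) T, HasDerivAt p (b ^ 2 * p s ^ 2 - p s) s)
    (hpi' : ∀ s ∈ Icc (0 : ℝ) T, HasDerivAt pi' (b ^ 2 * pi' s ^ 2 - p s) s)
    (hp₀ : ∀ s ∈ Icc (0 : ℝ) T, HasDerivAt p₀ (b ^ 2 * p₀ s ^ 2 - p₀ s) s)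
    (hpc : ContinuousOn p (Icc 0 T)) (hpi'c : ContinuousOn pi' (Icc 0 T))
    (hp₀c : ContinuousOn p₀ (Icc 0 T))
    (hpT : p T = g₀ + g) (hpi'T : pi' T = g₀) (hp₀T : p₀ T = g₀)
    (horder : ∀ s ∈ Ico (0 : ℝ) T, p₀ s < p s ∧ 0 < p₀ s) :
    ∀ s ∈ Icc (0 : ℝ) T,
      pi' s - p₀ s =
        ∫ t in s..T,
          exp (-∫ τ in s..t, b ^ 2 * (pi' τ + p₀ τ)) * (p t - p₀ t) ∧
      (s < T → p₀ s < pi' s) :=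
  stmt_10_general T b g₀ p pi' p₀ hpi' hp₀ hpc hpi'c hp₀c hpi'T hp₀T horder
end

section
/- Let T > 0, b ∈ ℝ, and let p, π : [0, T] → ℝ be continuously differentiable with p′ + p − b²p² = 0 and π′ − b²π² + p = 0 on [0, T], p(T) = g₀ + g, π(T) = g₀, where g₀ ≥ 0 and g > 0. Then p(s) − π(s) = g · exp(−∫ₛᵀ b²(p(τ) + π(τ))dτ) for all s ∈ [0, T]; in particular p(s) > π(s) on [0, T]. -/
/-!
Subtracting the two Riccati equations, the `p` terms cancel and `p² - π²` factors, so
`D = p - π` solves the linear equation `D' = b² (p + π) D`. With the integrating factor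
`exp (∫ₓᵀ b² (p + π))` the product `D x · exp (∫ₓᵀ …)` has zero derivative, hence equals its value
`g` at `T`; positivity of `exp` then gives `π < p`.
-/

open Real Set intervalIntegral

theorem eq_mul_exp_neg_integral_of_hasDerivAt_mul {c D : ℝ → ℝ} {s T : ℝ} (hsT : s ≤ T)
    (hc : ContinuousOn c (Icc s T)) (hD : ContinuousOn D (Icc s T))
    (hD' : ∀ x ∈ Ioo s T, HasDerivAt D (c x * D x) x) :
    D s = D T * exp (-∫ τ in s..T, c τ) := by
  rcases hsT.eq_or_lt with rfl | hsT
  · simp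
  set F : ℝ → ℝ := fun x => D x * exp (∫ τ in x..T, c τ) with hF
  have hF_cont : ContinuousOn F (Icc s T) := by
    have hI := continuousOn_primitive_interval_left (μ := MeasureTheory.volume)
      (hc.integrableOn_Icc.mono_set (uIcc_of_le hsT.le).subset)
    rw [uIcc_of_le hsT.le] at hI
    exact hD.mul hI.rexp
  have hF' : ∀ x ∈ Ioo s T, HasDerivAt F 0 x := by
    intro x hx
    have hx_nhds : Icc s T ∈ nhds x := Icc_mem_nhds hx.1 hx.2
    have hI : HasDerivAt (fun u => ∫ τ in u..T, c τ) (-c x) x :=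
      integral_hasDerivAt_left
        ((hc.mono (Icc_subset_Icc_left hx.1.le)).intervalIntegrable_of_Icc hx.2.le)
        ((hc.mono Ioo_subset_Icc_self).stronglyMeasurableAtFilter isOpen_Ioo x hx)
        (hc.continuousAt hx_nhds)
    exact ((hD' x hx).mul hI.exp).congr_deriv (by ring)
  obtain ⟨x, -, hx⟩ := exists_hasDerivAt_eq_slope F (fun _ => 0) hsT hF_cont hF'
  have hFsT : F s = F T := by
    rw [eq_comm, ← sub_eq_zero]
    exact (div_eq_zero_iff.1 hx.symm).resolve_right (sub_ne_zero.2 hsT.ne')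
  simp only [hF, integral_same, exp_zero, mul_one] at hFsT
  rw [← hFsT, mul_assoc, ← exp_add, add_neg_cancel, exp_zero, mul_one]

theorem stmt_11_general (T b g₀ g : ℝ) (hg : 0 < g)
    (p pi' : ℝ → ℝ)
    (hp : ∀ s ∈ Icc (0 : ℝ) T, HasDerivAt p (b ^ 2 * p s ^ 2 - p s) s)
    (hpi' : ∀ s ∈ Icc (0 : ℝ) T, HasDerivAt pi' (b ^ 2 * pi' s ^ 2 - p s) s)
    (hpc : ContinuousOn p (Icc 0 T)) (hpi'c : ContinuousOn pi' (Icc 0 T))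
    (hpT : p T = g₀ + g) (hpi'T : pi' T = g₀) :
    ∀ s ∈ Icc (0 : ℝ) T,
      p s - pi' s = g * exp (-∫ τ in s..T, b ^ 2 * (p τ + pi' τ)) ∧ pi' s < p s := by
  intro s hs
  have hsub : Icc s T ⊆ Icc 0 T := Icc_subset_Icc_left hs.1
  have hdiff : p s - pi' s = g * exp (-∫ τ in s..T, b ^ 2 * (p τ + pi' τ)) := by
    have h := eq_mul_exp_neg_integral_of_hasDerivAt_mul (c := fun x => b ^ 2 * (p x + pi' x))
      (D := fun x => p x - pi' x) hs.2
      (continuousOn_const.mul ((hpc.add hpi'c).mono hsub)) ((hpc.sub hpi'c).mono hsub)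
      fun x hx => by
        have hx' := hsub (Ioo_subset_Icc_self hx)
        exact ((hp x hx').sub (hpi' x hx')).congr_deriv (by ring)
    rwa [hpT, hpi'T, add_sub_cancel_left] at h
  exact ⟨hdiff, sub_pos.1 (hdiff ▸ mul_pos hg (exp_pos _))⟩

theorem stmt_11 (T b g₀ g : ℝ) (hT : 0 < T) (hg₀ : 0 ≤ g₀) (hg : 0 < g)
    (p pi' : ℝ → ℝ)
    (hp : ∀ s ∈ Icc (0 : ℝ) T, HasDerivAt p (b ^ 2 * p s ^ 2 - p s) s)
    (hpi' : ∀ s ∈ Icc (0 : ℝ) T, HasDerivAt pi' (b ^ 2 * pi' s ^ 2 - p s) s)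
    (hpc : ContinuousOn p (Icc 0 T)) (hpi'c : ContinuousOn pi' (Icc 0 T))
    (hpT : p T = g₀ + g) (hpi'T : pi' T = g₀) :
    ∀ s ∈ Icc (0 : ℝ) T,
      p s - pi' s = g * exp (-∫ τ in s..T, b ^ 2 * (p τ + pi' τ)) ∧ pi' s < p s :=
  stmt_11_general T b g₀ g hg p pi' hp hpi' hpc hpi'c hpT hpi'T
end
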